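/- Suppose α₀, …, α_l and β are ordinals with l ≥ 1, b ≤ l, and β + ω ≤ α_b. Then 2^{α₀} ⊕ ⋯ ⊕ 2^{α_l} ⊕ 2^{α_l} > (2^{α₀} ⊕ ⋯ ⊕ 2^{α_{b-1}} ⊕ 2^{β} ⊕ 2^{β}) + ω, where ⊕ is the natural sum of ordinals, exponentiations are ordinal base-2 exponentiations, and the final + is ordinal addition. -/

import Mathlib

universe u

/-! Mathlib no longer contains `NatOrdinal` and the natural sum `♯`
(`Mathlib/SetTheory/Ordinal/NaturalOps.lean` was removed); they are restored here
with their old definitions. -/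

/-- A type synonym for ordinals with natural addition. -/
def NatOrdinal : Type (u + 1) := Ordinal.{u}

instance NatOrdinal.instZero : Zero NatOrdinal.{u} := ⟨(0 : Ordinal.{u})⟩

noncomputable instance NatOrdinal.linearOrder : LinearOrder NatOrdinal.{u} := inferInstanceAs (LinearOrder Ordinal.{u})

/-- The identity function between `Ordinal` and `NatOrdinal`. -/
noncomputable def Ordinal.toNatOrdinal : Ordinal.{u} ≃o NatOrdinal.{u} := OrderIso.refl _

/-- The identity function between `NatOrdinal` and `Ordinal`. -/
noncomputable def NatOrdinal.toOrdinal : NatOrdinal.{u} ≃o Ordinal.{u} := OrderIso.refl _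

namespace Ordinal

/-- Natural addition on ordinals (Hessenberg sum). -/
noncomputable def nadd : Ordinal.{u} → Ordinal.{u} → Ordinal.{u}
  | a, b => max (blsub.{u, u} a fun a' _ => nadd a' b) (blsub.{u, u} b fun b' _ => nadd a b')
termination_by a b => (a, b)
decreasing_by
  all_goals first
    | exact Prod.Lex.left _ _ (by assumption)
    | exact Prod.Lex.right _ (by assumption)

theorem nadd_le_iff' {a b c : Ordinal.{u}} :
    nadd b c ≤ a ↔ (∀ b' < b, nadd b' c < a) ∧ ∀ c' < c, nadd b c' < a := by
  rw [nadd.eq_1, max_le_iff, blsub_le_iff, blsub_le_iff]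

theorem lt_nadd_iff' {a b c : Ordinal.{u}} :
    a < nadd b c ↔ (∃ b' < b, a ≤ nadd b' c) ∨ ∃ c' < c, a ≤ nadd b c' := by
  rw [nadd.eq_1, lt_max_iff, lt_blsub_iff, lt_blsub_iff]
  simp only [exists_prop]

theorem nadd_lt_nadd_left' {b c : Ordinal.{u}} (h : b < c) (a : Ordinal.{u}) :
    nadd a b < nadd a c :=
  lt_nadd_iff'.2 (Or.inr ⟨b, h, le_rfl⟩)

theorem nadd_lt_nadd_right' {b c : Ordinal.{u}} (h : b < c) (a : Ordinal.{u}) :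
    nadd b a < nadd c a :=
  lt_nadd_iff'.2 (Or.inl ⟨b, h, le_rfl⟩)

theorem nadd_le_nadd_left' {b c : Ordinal.{u}} (h : b ≤ c) (a : Ordinal.{u}) :
    nadd a b ≤ nadd a c := by
  rcases lt_or_eq_of_le h with h | rfl
  · exact (nadd_lt_nadd_left' h a).le
  · exact le_rfl

theorem nadd_le_nadd_right' {b c : Ordinal.{u}} (h : b ≤ c) (a : Ordinal.{u}) :
    nadd b a ≤ nadd c a := by
  rcases lt_or_eq_of_le h with h | rfl
  · exact (nadd_lt_nadd_right' h a).le
  · exact le_rfl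

theorem nadd_comm' : ∀ a b : Ordinal.{u}, nadd a b = nadd b a := by
  intro a
  induction a using Ordinal.induction with | _ a iha => ?_
  intro b
  induction b using Ordinal.induction with | _ b ihb => ?_
  apply le_antisymm
  · refine nadd_le_iff'.2 ⟨fun a' ha => ?_, fun b' hb => ?_⟩
    · rw [iha a' ha b]; exact nadd_lt_nadd_left' ha b
    · rw [ihb b' hb]; exact nadd_lt_nadd_right' hb a
  · refine nadd_le_iff'.2 ⟨fun b' hb => ?_, fun a' ha => ?_⟩
    · rw [← ihb b' hb]; exact nadd_lt_nadd_left' hb a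
    · rw [← iha a' ha b]; exact nadd_lt_nadd_right' ha b

theorem nadd_zero' : ∀ a : Ordinal.{u}, nadd a 0 = a := by
  intro a
  induction a using Ordinal.induction with | _ a iha => ?_
  apply le_antisymm
  · refine nadd_le_iff'.2 ⟨fun a' ha => ?_, fun c hc => absurd hc (by simp)⟩
    rw [iha a' ha]; exact ha
  · refine le_of_forall_lt (fun x hx => ?_)
    rw [← iha x hx]; exact nadd_lt_nadd_right' hx 0

theorem zero_nadd' (a : Ordinal.{u}) : nadd 0 a = a := by
  rw [nadd_comm', nadd_zero']

theorem nadd_assoc' : ∀ a b c : Ordinal.{u}, nadd (nadd a b) c = nadd a (nadd b c) := by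
  intro a
  induction a using Ordinal.induction with | _ a iha => ?_
  intro b
  induction b using Ordinal.induction with | _ b ihb => ?_
  intro c
  induction c using Ordinal.induction with | _ c ihc => ?_
  apply le_antisymm
  · refine nadd_le_iff'.2 ⟨fun d hd => ?_, fun c' hc => ?_⟩
    · rcases lt_nadd_iff'.1 hd with ⟨a', ha, hd'⟩ | ⟨b', hb, hd'⟩
      · calc nadd d c ≤ nadd (nadd a' b) c := nadd_le_nadd_right' hd' c
          _ = nadd a' (nadd b c) := iha a' ha b c
          _ < nadd a (nadd b c) := nadd_lt_nadd_right' ha _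
      · calc nadd d c ≤ nadd (nadd a b') c := nadd_le_nadd_right' hd' c
          _ = nadd a (nadd b' c) := ihb b' hb c
          _ < nadd a (nadd b c) := nadd_lt_nadd_left' (nadd_lt_nadd_right' hb c) a
    · rw [ihc c' hc]
      exact nadd_lt_nadd_left' (nadd_lt_nadd_left' hc b) a
  · refine nadd_le_iff'.2 ⟨fun a' ha => ?_, fun e he => ?_⟩
    · rw [← iha a' ha b c]
      exact nadd_lt_nadd_right' (nadd_lt_nadd_right' ha b) c
    · rcases lt_nadd_iff'.1 he with ⟨b', hb, he'⟩ | ⟨c', hc, he'⟩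
      · calc nadd a e ≤ nadd a (nadd b' c) := nadd_le_nadd_left' he' a
          _ = nadd (nadd a b') c := (ihb b' hb c).symm
          _ < nadd (nadd a b) c := nadd_lt_nadd_right' (nadd_lt_nadd_left' hb a) c
      · calc nadd a e ≤ nadd a (nadd b c') := nadd_le_nadd_left' he' a
          _ = nadd (nadd a b) c' := (ihc c' hc).symm
          _ < nadd (nadd a b) c := nadd_lt_nadd_left' hc _

end Ordinal

namespace NaturalOps

/-- Natural addition on ordinals. -/
infixl:65 " ♯ " => Ordinal.nadd

end NaturalOps

noncomputable instance NatOrdinal.instAdd : Add NatOrdinal.{u} := ⟨Ordinal.nadd⟩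

noncomputable instance NatOrdinal.instAddCommMonoid : AddCommMonoid NatOrdinal.{u} where
  add_assoc a b c := Ordinal.nadd_assoc' a b c
  zero_add a := Ordinal.zero_nadd' a
  add_zero a := Ordinal.nadd_zero' a
  add_comm a b := Ordinal.nadd_comm' a b
  nsmul := nsmulRec

open Ordinal
open scoped NaturalOps

/-- The natural (Hessenberg) sum of a finite family of ordinals. -/
noncomputable def natSum {ι : Type*} (s : Finset ι) (f : ι → Ordinal) : Ordinal :=
  NatOrdinal.toOrdinal (∑ i ∈ s, Ordinal.toNatOrdinal (f i))

/-!
Pushing the ordinal `+ ω` inside a natural sum only makes it larger, `(a ♯ b) + c ≤ a ♯ (b + c)`,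
so it suffices to absorb `(2 ^ β ♯ 2 ^ β) + ω` into `2 ^ α_b ≥ 2 ^ (β + ω) = ω ^ (β / ω + 1)`.
This works because every power `ω ^ q` is closed under `♯`, not only under `+`: for `x, y < ω ^ q`
pick `p < q` with `x, y < ω ^ p * n`, and write `x`, `y` in base `ω ^ p`; by induction on `q` the
natural sum of the digits stays a natural number and that of the remainders stays below `ω ^ p`.
-/

namespace Ordinal

theorem le_self_nadd (a b : Ordinal.{u}) : a ≤ a ♯ b := by
  simpa only [nadd_zero'] using nadd_le_nadd_left' zero_le a

theorem lt_nadd_of_pos_right (a : Ordinal.{u}) {b : Ordinal.{u}} (hb : 0 < b) : a < a ♯ b := by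
  simpa only [nadd_zero'] using nadd_lt_nadd_left' hb a

theorem nadd_succ (a b : Ordinal.{u}) : a ♯ Order.succ b = Order.succ (a ♯ b) := by
  induction a using WellFoundedLT.induction generalizing b with | _ a iha => ?_
  apply le_antisymm
  · refine nadd_le_iff'.2 ⟨fun a' ha => ?_, fun c' hc => ?_⟩
    · rw [iha a' ha b]
      exact Order.succ_lt_succ (nadd_lt_nadd_right' ha b)
    · exact Order.lt_succ_iff.2 (nadd_le_nadd_left' (Order.lt_succ_iff.1 hc) a)
  · exact Order.succ_le_of_lt (nadd_lt_nadd_left' (Order.lt_succ b) a)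

theorem nadd_natCast (a : Ordinal.{u}) (n : ℕ) : a ♯ n = a + n := by
  induction n with
  | zero => simp only [Nat.cast_zero, nadd_zero', add_zero]
  | succ n ih => rw [Nat.cast_succ, ← add_assoc, ← Order.succ_eq_add_one, ← Order.succ_eq_add_one,
    nadd_succ, ih]

theorem nadd_add_le (a b c : Ordinal.{u}) : (a ♯ b) + c ≤ a ♯ (b + c) := by
  induction c using Ordinal.limitRecOn with
  | zero => simp only [add_zero, le_refl]
  | add_one c ih =>
    rw [← add_assoc, ← add_assoc, ← Order.succ_eq_add_one, ← Order.succ_eq_add_one, nadd_succ]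
    exact Order.succ_le_succ ih
  | limit c hc ih =>
    refine (add_le_iff_of_isSuccLimit hc).2 fun c' hc' => ?_
    exact (ih c' hc').trans (nadd_le_nadd_left' (add_le_add_right hc'.le b) a)

theorem isPrincipal_nadd_omega0 : IsPrincipal (· ♯ ·) ω := by
  intro a b ha hb
  obtain ⟨m, rfl⟩ := lt_omega0.1 ha
  obtain ⟨n, rfl⟩ := lt_omega0.1 hb
  simpa only [nadd_natCast, ← Nat.cast_add] using natCast_lt_omega0 (m + n)

theorem mul_div_nadd_add_mod_nadd_lt_of_lt {c : Ordinal.{u}} (hc : c ≠ 0)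
    (hcn : IsPrincipal (· ♯ ·) c) {x' x : Ordinal.{u}} (h : x' < x) (y : Ordinal.{u}) :
    c * (x' / c ♯ y / c) + (x' % c ♯ y % c) < c * (x / c ♯ y / c) + (x % c ♯ y % c) := by
  rcases (div_le_left h.le c).lt_or_eq with hdiv | hdiv
  · calc c * (x' / c ♯ y / c) + (x' % c ♯ y % c)
        < c * (x' / c ♯ y / c) + c := add_lt_add_right (hcn (mod_lt x' hc) (mod_lt y hc)) _
      _ = c * Order.succ (x' / c ♯ y / c) := by rw [Order.succ_eq_add_one, mul_add_one]
      _ ≤ c * (x / c ♯ y / c) :=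
          mul_le_mul_right (Order.succ_le_of_lt (nadd_lt_nadd_right' hdiv _)) c
      _ ≤ c * (x / c ♯ y / c) + (x % c ♯ y % c) := le_self_add
  · have hmod : x' % c < x % c := by
      rwa [← div_add_mod x' c, ← div_add_mod x c, hdiv, add_lt_add_iff_left] at h
    rw [hdiv]
    exact add_lt_add_right (nadd_lt_nadd_right' hmod _) _

theorem nadd_le_mul_div_nadd_add_mod_nadd {c : Ordinal.{u}} (hc : c ≠ 0)
    (hcn : IsPrincipal (· ♯ ·) c) (x y : Ordinal.{u}) :
    x ♯ y ≤ c * (x / c ♯ y / c) + (x % c ♯ y % c) := by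
  induction x using WellFoundedLT.induction generalizing y with | _ x ihx => ?_
  induction y using WellFoundedLT.induction with | _ y ihy => ?_
  refine nadd_le_iff'.2 ⟨fun x' hx' => ?_, fun y' hy' => ?_⟩
  · exact (ihx x' hx' y).trans_lt (mul_div_nadd_add_mod_nadd_lt_of_lt hc hcn hx' y)
  · have h := mul_div_nadd_add_mod_nadd_lt_of_lt hc hcn hy' x
    rw [nadd_comm' (y' / c), nadd_comm' (y' % c), nadd_comm' (y / c), nadd_comm' (y % c)] at h
    exact (ihy y' hy').trans_lt h

theorem isPrincipal_nadd_omega0_opow (q : Ordinal.{u}) : IsPrincipal (· ♯ ·) (ω ^ q) := by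
  induction q using WellFoundedLT.induction with | _ q ih => ?_
  suffices key : ∀ a b, a ≤ b → b < ω ^ q → a ♯ b < ω ^ q by
    intro a b ha hb
    rcases le_total a b with hab | hba
    · exact key a b hab hb
    · show a ♯ b < _
      rw [nadd_comm']
      exact key b a hba ha
  intro a b hab hb
  rcases eq_or_ne q 0 with rfl | hq
  · obtain rfl : b = 0 := Order.lt_one_iff.1 (opow_zero ω ▸ hb)
    obtain rfl : a = 0 := nonpos_iff_eq_zero.1 hab
    rwa [nadd_zero']
  obtain ⟨p, hpq, n, hbn⟩ := (lt_omega0_opow hq).1 hb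
  have hp : ω ^ p ≠ 0 := opow_ne_zero p omega0_ne_zero
  have hfin : ∀ x ≤ b, x / ω ^ p < ω := fun x hx =>
    ((lt_mul_iff_div_lt hp).1 (hx.trans_lt hbn)).trans (natCast_lt_omega0 n)
  calc a ♯ b ≤ ω ^ p * (a / ω ^ p ♯ b / ω ^ p) + (a % ω ^ p ♯ b % ω ^ p) :=
        nadd_le_mul_div_nadd_add_mod_nadd hp (ih p hpq) a b
    _ < ω ^ p * (a / ω ^ p ♯ b / ω ^ p) + ω ^ p :=
        add_lt_add_right (ih p hpq (mod_lt a hp) (mod_lt b hp)) _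
    _ = ω ^ p * (a / ω ^ p ♯ b / ω ^ p + 1) := (mul_add_one _ _).symm
    _ < ω ^ q :=
        have hdigits := isPrincipal_nadd_omega0 (hfin a hab) (hfin b le_rfl)
        opow_mul_lt_opow (isPrincipal_add_omega0 hdigits one_lt_omega0) hpq

theorem two_opow_add_omega0 (β : Ordinal.{u}) : (2 : Ordinal) ^ (β + ω) = ω ^ (β / ω + 1) := by
  have hβ : β + ω = ω * (β / ω + 1) := by
    conv_lhs => rw [← div_add_mod β ω]
    rw [add_assoc, add_omega0 (mod_lt β omega0_ne_zero), mul_add_one]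
  rw [hβ, opow_mul, opow_omega0 one_lt_two (by exact_mod_cast natCast_lt_omega0 2)]

theorem two_opow_nadd_two_opow_add_omega0_le (β : Ordinal.{u}) :
    ((2 : Ordinal) ^ β ♯ (2 : Ordinal) ^ β) + ω ≤ (2 : Ordinal) ^ (β + ω) := by
  have hlt : (2 : Ordinal) ^ β < ω ^ (β / ω + 1) := by
    rw [← two_opow_add_omega0]
    exact (opow_lt_opow_iff_right one_lt_two).2 (lt_add_of_pos_right β omega0_pos)
  rw [two_opow_add_omega0]
  calc ((2 : Ordinal) ^ β ♯ (2 : Ordinal) ^ β) + ω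
      ≤ ((2 : Ordinal) ^ β ♯ (2 : Ordinal) ^ β) + ω ^ (β / ω + 1) :=
        add_le_add_right (left_le_opow ω (lt_add_of_le_of_pos zero_le zero_lt_one)) _
    _ = ω ^ (β / ω + 1) := add_omega0_opow (isPrincipal_nadd_omega0_opow _ hlt hlt)

end Ordinal

theorem natSum_range_succ (f : ℕ → Ordinal) (n : ℕ) :
    natSum (Finset.range (n + 1)) f = natSum (Finset.range n) f ♯ f n := by
  rw [natSum, natSum, Finset.sum_range_succ]
  rfl

theorem natSum_range_mono (f : ℕ → Ordinal) : Monotone fun n => natSum (Finset.range n) f := by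
  refine monotone_nat_of_le_succ fun n => ?_
  rw [natSum_range_succ]
  exact le_self_nadd _ _

theorem measure_decrease_backtrack_general (l b : ℕ) (hb : b ≤ l)
    (α : ℕ → Ordinal) (β : Ordinal) (hβ : β + ω ≤ α b) :
    (natSum (Finset.range (l + 1)) (fun i => (2 : Ordinal) ^ α i)) ♯ (2 : Ordinal) ^ α l >
      ((natSum (Finset.range b) (fun i => (2 : Ordinal) ^ α i)) ♯
          (2 : Ordinal) ^ β ♯ (2 : Ordinal) ^ β) + ω := by
  set f : ℕ → Ordinal := fun i => (2 : Ordinal) ^ α i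
  have hpair : ((2 : Ordinal) ^ β ♯ (2 : Ordinal) ^ β) + ω ≤ f b :=
    (two_opow_nadd_two_opow_add_omega0_le β).trans (opow_le_opow_right two_pos hβ)
  calc (natSum (Finset.range b) f ♯ (2 : Ordinal) ^ β ♯ (2 : Ordinal) ^ β) + ω
      = (natSum (Finset.range b) f ♯ ((2 : Ordinal) ^ β ♯ (2 : Ordinal) ^ β)) + ω := by
        rw [nadd_assoc']
    _ ≤ natSum (Finset.range b) f ♯ (((2 : Ordinal) ^ β ♯ (2 : Ordinal) ^ β) + ω) :=
        nadd_add_le _ _ _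
    _ ≤ natSum (Finset.range (b + 1)) f := by
        rw [natSum_range_succ]
        exact nadd_le_nadd_left' hpair _
    _ < natSum (Finset.range (b + 1)) f ♯ f l := lt_nadd_of_pos_right _ (opow_pos _ two_pos)
    _ ≤ natSum (Finset.range (l + 1)) f ♯ f l :=
        nadd_le_nadd_right' (natSum_range_mono f (Nat.succ_le_succ hb)) _

theorem measure_decrease_backtrack (l b : ℕ) (hl : 1 ≤ l) (hb : b ≤ l)
    (α : ℕ → Ordinal) (β : Ordinal) (hβ : β + ω ≤ α b) :
    (natSum (Finset.range (l + 1)) (fun i => (2 : Ordinal) ^ α i)) ♯ (2 : Ordinal) ^ α l >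
      ((natSum (Finset.range b) (fun i => (2 : Ordinal) ^ α i)) ♯
          (2 : Ordinal) ^ β ♯ (2 : Ordinal) ^ β) + ω :=
  measure_decrease_backtrack_general l b hb α β hβ
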